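/- For all n ≥ 0 and r ≥ 1: ((r-1)!/(1-λ)^{r-1}) S_λ(n,r-1) = ∑_{l=0}^{n} [ C(n,l) ∑_{m=0}^{min(r,l)} C(r,m)/(1-λ)^m · m! S(l,m) ] H_{n-l}(λ), where H_k(λ) are the Frobenius-Euler numbers, S_λ(n,k) = (1/k!) ∑_{j=0}^{k} C(k,j)(-λ)^{k-j} j^n, and S(l,m) are the Stirling numbers of the second kind. -/

import Mathlib

/-! By the binomial theorem, `(e^t - λ)^r = (1-λ)^r ∑_m C(r,m)/(1-λ)^m (e^t - 1)^m`, and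
`(e^t - 1)^m` is the exponential generating function of `m! S(l,m)`. Multiplying by the
generating function `(1-λ)/(e^t - λ)` of the `H_k(λ)` gives
`(e^t - λ)^{r-1}/(1-λ)^{r-1} = (∑_m C(r,m)/(1-λ)^m (e^t - 1)^m) · (1-λ)/(e^t - λ)`;
the `n`-th exponential coefficient of the left side is `(r-1)! S_λ(n,r-1)/(1-λ)^{r-1}`, that of
the right side is the binomial convolution in the claim. -/

open Finset PowerSeries

/-- `m! S(l,m) = ∑_{k₁+⋯+k_m = l, k_j ≥ 1} (l choose k₁,…,k_m)`, i.e. `m!` times the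
Stirling number of the second kind. -/
def mFactStirling (l m : ℕ) : ℕ :=
  ∑ k ∈ (Finset.Nat.antidiagonalTuple m l).filter (fun k => ∀ j, 1 ≤ k j),
    Nat.multinomial Finset.univ k

open scoped Nat

theorem mFactStirling_eq_zero_of_lt {l m : ℕ} (h : l < m) : mFactStirling l m = 0 := by
  refine Finset.sum_eq_zero fun k hk => absurd h (not_lt.2 ?_)
  simp only [Finset.mem_filter, Finset.Nat.mem_antidiagonalTuple] at hk
  calc m = ∑ _j : Fin m, 1 := by simp
    _ ≤ ∑ j, k j := Finset.sum_le_sum fun j _ => hk.2 j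
    _ = l := hk.1

namespace PowerSeries

section CommSemiring

variable {R : Type*} [CommSemiring R]

theorem coeff_pow_eq_sum_antidiagonalTuple (f : R⟦X⟧) (m n : ℕ) :
    coeff n (f ^ m) = ∑ k ∈ Finset.Nat.antidiagonalTuple m n, ∏ j, coeff (k j) f := by
  rw [← Fin.prod_const, coeff_prod]
  exact Finset.sum_equiv Finsupp.equivFunOnFinite
    (by simp [Finset.Nat.mem_antidiagonalTuple]) (by simp)

theorem factorial_mul_coeff_mul (f g : R⟦X⟧) (n : ℕ) :
    (n ! : R) * coeff n (f * g) =
      ∑ l ∈ range (n + 1), n.choose l * ((l ! : R) * coeff l f) * ((n - l)! * coeff (n - l) g) := by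
  rw [coeff_mul, Finset.Nat.sum_antidiagonal_eq_sum_range_succ_mk, Finset.mul_sum]
  refine Finset.sum_congr rfl fun l hl => ?_
  rw [← Nat.choose_mul_factorial_mul_factorial (Finset.mem_range_succ_iff.1 hl)]
  push_cast
  ring

end CommSemiring

section Field

variable {K : Type*} [Field K]

theorem add_C_pow_eq_C_pow_mul_sum {u : K} (hu : u ≠ 0) (f : K⟦X⟧) (r : ℕ) :
    (f + C u) ^ r = C (u ^ r) * ∑ m ∈ range (r + 1), C (r.choose m / u ^ m) * f ^ m := by
  rw [add_pow, Finset.mul_sum]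
  refine Finset.sum_congr rfl fun m hm => ?_
  rw [← mul_assoc, ← map_mul, ← map_pow, ← map_natCast C, mul_assoc, ← map_mul,
    pow_sub₀ u hu (Finset.mem_range_succ_iff.1 hm)]
  field_simp
  ring

variable [CharZero K]

theorem factorial_mul_coeff_exp_sub_C_pow (a : K) (s n : ℕ) :
    (n ! : K) * coeff n ((exp K - C a) ^ s) =
      ∑ j ∈ range (s + 1), s.choose j * (-a) ^ (s - j) * (j : K) ^ n := by
  rw [sub_eq_add_neg, ← map_neg, add_pow, map_sum, Finset.mul_sum]
  refine Finset.sum_congr rfl fun j _ => ?_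
  rw [exp_pow_eq_rescale_exp, ← map_pow, ← map_natCast C, mul_assoc, ← map_mul, coeff_mul_C,
    coeff_rescale, coeff_exp, map_div₀, map_one, map_natCast]
  have : (n ! : K) ≠ 0 := Nat.cast_ne_zero.2 n.factorial_ne_zero
  field_simp

theorem coeff_exp_sub_one (k : ℕ) :
    coeff k (exp K - 1) = if k = 0 then 0 else (k ! : K)⁻¹ := by
  rcases eq_or_ne k 0 with rfl | hk <;> simp [coeff_exp, coeff_one, *]

theorem factorial_mul_coeff_exp_sub_one_pow (l m : ℕ) :
    (l ! : K) * coeff l ((exp K - 1) ^ m) = mFactStirling l m := by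
  rw [coeff_pow_eq_sum_antidiagonalTuple, mFactStirling, Nat.cast_sum, Finset.sum_filter,
    Finset.mul_sum]
  refine Finset.sum_congr rfl fun k hk => ?_
  split_ifs with hpos
  · have hcoeff : ∀ j, coeff (k j) (exp K - 1) = ((k j)! : K)⁻¹ := fun j => by
      rw [coeff_exp_sub_one, if_neg (Nat.one_le_iff_ne_zero.1 (hpos j))]
    rw [← (Finset.Nat.mem_antidiagonalTuple.1 hk), Finset.prod_congr rfl fun j _ => hcoeff j,
      ← Nat.multinomial_spec, Nat.cast_mul, Nat.cast_prod, Finset.prod_inv_distrib]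
    have : ∏ j, ((k j)! : K) ≠ 0 :=
      Finset.prod_ne_zero_iff.2 fun j _ => Nat.cast_ne_zero.2 (Nat.factorial_ne_zero _)
    field_simp
  · obtain ⟨j, hj⟩ := not_forall.1 hpos
    have hj0 : k j = 0 := by omega
    rw [Finset.prod_eq_zero (Finset.mem_univ j) (by rw [coeff_exp_sub_one, if_pos hj0]),
      mul_zero]

theorem factorial_mul_coeff_sum_C_mul_exp_sub_one_pow (c : ℕ → K) (r l : ℕ) :
    (l ! : K) * coeff l (∑ m ∈ range (r + 1), C (c m) * (exp K - 1) ^ m) =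
      ∑ m ∈ range (min r l + 1), c m * mFactStirling l m := by
  simp only [map_sum, coeff_C_mul, Finset.mul_sum, mul_left_comm (l ! : K),
    factorial_mul_coeff_exp_sub_one_pow]
  refine (Finset.sum_subset (by simp) fun m hm hm' => ?_).symm
  simp only [Finset.mem_range] at hm hm'
  rw [mFactStirling_eq_zero_of_lt (by omega), Nat.cast_zero, mul_zero]

end Field

end PowerSeries

/-- For `r ≥ 1`:
`((r-1)!/(1-λ)^{r-1}) S_λ(n,r-1) = ∑_{l=0}^{n} [C(n,l) ∑_{m=0}^{min(r,l)} C(r,m)/(1-λ)ᵐ · m!S(l,m)] H_{n-l}(λ)`,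
where `H k` are the Frobenius-Euler numbers and
`S_λ(n,k) = (1/k!) ∑_{j=0}^{k} C(k,j)(-λ)^{k-j} jⁿ`. -/
theorem lambda_stirling_frobenius_euler_numbers (lam : ℂ) (hlam : lam ≠ 1)
    (H : ℕ → ℂ)
    (hH : (PowerSeries.mk fun n => H n * ((n.factorial : ℂ))⁻¹) *
        (PowerSeries.exp ℂ - PowerSeries.C (R := ℂ) lam) = PowerSeries.C (R := ℂ) (1 - lam))
    (n r : ℕ) (hr : 1 ≤ r) :
    (((r - 1).factorial : ℂ) / (1 - lam) ^ (r - 1)) *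
        ((((r - 1).factorial : ℂ))⁻¹ *
          ∑ j ∈ range ((r - 1) + 1),
            ((r - 1).choose j : ℂ) * (-lam) ^ ((r - 1) - j) * (j : ℂ) ^ n) =
      ∑ l ∈ range (n + 1),
        ((n.choose l : ℂ) * ∑ m ∈ range (min r l + 1),
          (r.choose m : ℂ) / (1 - lam) ^ m * (mFactStirling l m : ℂ)) * H (n - l) := by
  have hu : (1 : ℂ) - lam ≠ 0 := sub_ne_zero.2 hlam.symm
  obtain ⟨s, rfl⟩ : ∃ s, r = s + 1 := ⟨r - 1, by omega⟩
  set A := ∑ m ∈ range (s + 1 + 1), C (((s + 1).choose m : ℂ) / (1 - lam) ^ m) * (exp ℂ - 1) ^ m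
  set Hs := mk fun n => H n * ((n.factorial : ℂ))⁻¹
  have hpow : (exp ℂ - C lam) ^ (s + 1) = C ((1 - lam) ^ (s + 1)) * A := by
    rw [← add_C_pow_eq_C_pow_mul_sum hu, map_sub, map_one, sub_add_sub_cancel]
  have hA : C ((1 - lam) ^ (s + 1)) * (A * Hs) = C (1 - lam) * (exp ℂ - C lam) ^ s := by
    rw [← mul_assoc, ← hpow, pow_succ, mul_assoc, mul_comm _ Hs, hH, mul_comm]
  have hcoeff := congrArg (fun f => (n ! : ℂ) * coeff n f) hA
  simp only [coeff_C_mul, mul_left_comm (n ! : ℂ), factorial_mul_coeff_mul,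
    factorial_mul_coeff_exp_sub_C_pow, A, factorial_mul_coeff_sum_C_mul_exp_sub_one_pow, Hs,
    coeff_mk] at hcoeff
  have hHk : ∀ k, (k ! : ℂ) * (H k * (k ! : ℂ)⁻¹) = H k := fun k => by
    rw [mul_left_comm, mul_inv_cancel₀ (Nat.cast_ne_zero.2 k.factorial_ne_zero), mul_one]
  simp only [hHk] at hcoeff
  rw [Nat.add_sub_cancel, div_mul_eq_mul_div,
    mul_inv_cancel_left₀ (Nat.cast_ne_zero.2 s.factorial_ne_zero), div_eq_iff (pow_ne_zero _ hu)]
  refine mul_left_cancel₀ hu ?_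
  linear_combination -hcoeff
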